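/- If G is a König-Egerváry graph, then the number of vertices v such that G - v is König-Egerváry equals n(G) - |core(G)| + |ker(G)|. -/

import Mathlib

open SimpleGraph

variable {V : Type*}

/-- A set of vertices is independent: no two of its vertices are adjacent. -/
def IsIndep (G : SimpleGraph V) (s : Set V) : Prop :=
  s.Pairwise fun a b => ¬ G.Adj a b

/-- The independence number α(G). -/
noncomputable def alphaNum (G : SimpleGraph V) : ℕ :=
  sSup {n | ∃ s : Set V, IsIndep G s ∧ s.ncard = n}

/-- The matching number μ(G). -/
noncomputable def muNum (G : SimpleGraph V) : ℕ :=
  sSup {n | ∃ M : SimpleGraph.Subgraph G, M.IsMatching ∧ M.edgeSet.ncard = n}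

/-- The neighborhood N(A) of a set of vertices. -/
def nbhd (G : SimpleGraph V) (A : Set V) : Set V := {v | ∃ a ∈ A, G.Adj a v}

/-- The difference d(A) = |A| - |N(A)| of a set of vertices. -/
noncomputable def diffSet (G : SimpleGraph V) (A : Set V) : ℤ :=
  (A.ncard : ℤ) - (nbhd G A).ncard

/-- The critical difference d(G). -/
noncomputable def critDiff (G : SimpleGraph V) : ℤ :=
  sSup {d | ∃ I : Set V, IsIndep G I ∧ diffSet G I = d}

/-- A critical independent set: an independent set attaining the critical difference. -/
def IsCriticalIndep (G : SimpleGraph V) (A : Set V) : Prop :=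
  IsIndep G A ∧ diffSet G A = critDiff G

/-- ker(G): the intersection of all critical independent sets. -/
noncomputable def kerSet (G : SimpleGraph V) : Set V :=
  ⋂₀ {A | IsCriticalIndep G A}

/-- A maximum independent set. -/
noncomputable def IsMaxIndep (G : SimpleGraph V) (S : Set V) : Prop :=
  IsIndep G S ∧ S.ncard = alphaNum G

/-- core(G): the intersection of all maximum independent sets. -/
noncomputable def coreSet (G : SimpleGraph V) : Set V :=
  ⋂₀ {S | IsMaxIndep G S}

/-- A König–Egerváry graph: α(G) + μ(G) = n(G). -/
def KonigEgervary (G : SimpleGraph V) : Prop :=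
  alphaNum G + muNum G = Nat.card V

/-!
For any matching `M` and any set `A`, sending matched vertices of `A` to their partners gives
`|A| - |N(A)| ≤ n - |V(M)|`, so `d(G) ≤ n - 2μ(G)`; in a König–Egerváry graph a maximum independent
set attains `α - μ = n - 2μ`, hence `d(G) = α - μ`, every maximum independent set is critical and
`ker(G) ⊆ core(G)`.

Deleting `v` lowers `α` by one if `v ∈ core(G)` and keeps it otherwise, while `μ` drops by at most
one. So `G - v` is König–Egerváry when `v ∉ core(G)`, and for `v ∈ core(G)` exactly when some
maximum matching of `G` misses `v`. If `v ∈ ker(G)`, Hall's theorem matches `Sᶜ` into `S \ {v}`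
for a maximum independent set `S`, because a Hall violator would yield a critical independent set
avoiding `v`. If `v ∈ core(G) \ ker(G)`, a critical set avoiding `v` and a maximum matching missing
`v` make the first inequality strict, contradicting `d(G) = n - 2μ(G)`. Hence the vertices with
`G - v` König–Egerváry are exactly those outside `core(G) \ ker(G)`.
-/

namespace SimpleGraph.Subgraph

variable {G : SimpleGraph V} {M : G.Subgraph}

theorem IsMatching.ncard_verts [Finite V] (hM : M.IsMatching) :
    M.verts.ncard = 2 * M.edgeSet.ncard := by
  have hfin : M.edgeSet.Finite := Set.toFinite _
  have hdisj : M.edgeSet.PairwiseDisjoint ((↑) : Sym2 V → Set V) := by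
    intro e he f hf hef
    refine Set.disjoint_left.mpr fun x hxe hxf => hef ?_
    obtain ⟨y, rfl⟩ := Sym2.mem_iff_exists.mp hxe
    obtain ⟨z, rfl⟩ := Sym2.mem_iff_exists.mp hxf
    rw [hM.eq_of_adj_left (M.mem_edgeSet.mp he) (M.mem_edgeSet.mp hf)]
  have htwo : ∀ e ∈ M.edgeSet, (e : Set V).ncard = 2 := by
    intro e he
    induction e with
    | h a b => rw [Sym2.coe_mk, Set.ncard_pair (M.adj_sub he).ne]
  rw [hM.verts_eq_biUnion_edgeSet, hfin.ncard_biUnion (fun _ _ => Set.toFinite _) hdisj,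
    finsum_mem_congr rfl htwo, finsum_mem_eq_finite_toFinset_sum _ hfin, Finset.sum_const,
    Set.ncard_eq_toFinset_card _ hfin, smul_eq_mul, mul_comm]

theorem IsMatching.ncard_inter_verts_le [Finite V] (hM : M.IsMatching) (A : Set V) :
    (A ∩ M.verts).ncard ≤ (nbhd G A ∩ M.verts).ncard := by
  choose! p hp using fun a (ha : a ∈ A ∩ M.verts) => (hM ha.2).exists
  refine Set.ncard_le_ncard_of_injOn p
    (fun a ha => ⟨⟨a, ha.1, M.adj_sub (hp a ha)⟩, (hp a ha).snd_mem⟩)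
    fun a ha b hb hab => hM.eq_of_adj_right (hp a ha) (hab ▸ hp b hb)

theorem IsMatching.deleteVerts_pair {v w : V} (hM : M.IsMatching) (hvw : M.Adj v w) :
    (M.deleteVerts {v, w}).IsMatching := by
  rintro a ⟨ha, hav⟩
  obtain ⟨b, hab, huniq⟩ := hM ha
  have hbv : b ∉ ({v, w} : Set V) := by
    rintro (rfl | rfl)
    · exact hav (Or.inr (hM.eq_of_adj_left hvw hab.symm).symm)
    · exact hav (Or.inl (hM.eq_of_adj_right hab hvw))
  exact ⟨b, deleteVerts_adj.mpr ⟨ha, hav, hab.snd_mem, hbv, hab⟩,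
    fun c hc => huniq c (deleteVerts_adj.mp hc).2.2.2.2⟩

/-- The extra term makes the bound strict as soon as some unmatched vertex lies outside `A`. -/
theorem IsMatching.diffSet_add_ncard_sdiff_le [Finite V] (hM : M.IsMatching) (A : Set V) :
    diffSet G A + (M.vertsᶜ \ A).ncard ≤ Nat.card V - M.verts.ncard := by
  have hpartner := hM.ncard_inter_verts_le A
  have hnbhd := Set.ncard_le_ncard (Set.inter_subset_left : nbhd G A ∩ M.verts ⊆ nbhd G A)
  have hA := Set.ncard_inter_add_ncard_sdiff_eq_ncard A M.verts
  have hcompl := Set.ncard_inter_add_ncard_sdiff_eq_ncard M.vertsᶜ A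
  rw [Set.inter_comm, ← Set.sdiff_eq] at hcompl
  have hV := Set.ncard_add_ncard_compl M.verts
  simp only [diffSet]
  omega

end SimpleGraph.Subgraph

theorem IsIndep.mono {G : SimpleGraph V} {s t : Set V} (hs : IsIndep G s) (hts : t ⊆ s) :
    IsIndep G t :=
  Set.Pairwise.mono hts hs

section Finite

variable [Finite V] {G : SimpleGraph V}

theorem IsIndep.ncard_le_alphaNum {s : Set V} (hs : IsIndep G s) : s.ncard ≤ alphaNum G :=
  le_csSup ⟨Nat.card V, by rintro _ ⟨t, -, rfl⟩; exact Set.ncard_le_card t⟩ ⟨s, hs, rfl⟩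

theorem exists_isMaxIndep (G : SimpleGraph V) : ∃ S, IsMaxIndep G S :=
  Nat.sSup_mem (s := {n | ∃ s : Set V, IsIndep G s ∧ s.ncard = n})
    ⟨0, ∅, Set.pairwise_empty _, Set.ncard_empty V⟩
    ⟨Nat.card V, by rintro _ ⟨t, -, rfl⟩; exact Set.ncard_le_card t⟩

theorem SimpleGraph.Subgraph.IsMatching.ncard_edgeSet_le_muNum {M : G.Subgraph}
    (hM : M.IsMatching) : M.edgeSet.ncard ≤ muNum G :=
  le_csSup ⟨Nat.card (Sym2 V), by rintro _ ⟨M, -, rfl⟩; exact Set.ncard_le_card _⟩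
    ⟨M, hM, rfl⟩

theorem exists_isMatching_ncard_edgeSet_eq_muNum (G : SimpleGraph V) :
    ∃ M : G.Subgraph, M.IsMatching ∧ M.edgeSet.ncard = muNum G :=
  Nat.sSup_mem (s := {n | ∃ M : G.Subgraph, M.IsMatching ∧ M.edgeSet.ncard = n})
    ⟨0, ⊥, fun _ h => h.elim, by simp⟩
    ⟨Nat.card (Sym2 V), by rintro _ ⟨M, -, rfl⟩; exact Set.ncard_le_card _⟩

theorem diffSet_le_critDiff {A : Set V} (hA : IsIndep G A) : diffSet G A ≤ critDiff G := by
  refine le_csSup ⟨Nat.card V, ?_⟩ ⟨A, hA, rfl⟩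
  rintro _ ⟨I, -, rfl⟩
  have := Set.ncard_le_card I
  simp only [diffSet]
  omega

theorem IsIndep.two_mul_ncard_sub_le_diffSet {s : Set V} (hs : IsIndep G s) :
    2 * (s.ncard : ℤ) - Nat.card V ≤ diffSet G s := by
  have hnbhd : nbhd G s ⊆ sᶜ := fun _ ⟨_, ha, hadj⟩ hx => hs ha hx hadj.ne hadj
  have := Set.ncard_le_ncard hnbhd
  have := Set.ncard_add_ncard_compl s
  simp only [diffSet]
  omega

theorem alphaNum_add_muNum_le (G : SimpleGraph V) : alphaNum G + muNum G ≤ Nat.card V := by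
  obtain ⟨S, hS, hScard⟩ := exists_isMaxIndep G
  obtain ⟨M, hM, hMcard⟩ := exists_isMatching_ncard_edgeSet_eq_muNum G
  have hlower := hS.two_mul_ncard_sub_le_diffSet
  have hupper := hM.diffSet_add_ncard_sdiff_le S
  have := hM.ncard_verts
  omega

end Finite

namespace KonigEgervary

variable [Finite V] {G : SimpleGraph V} (hKE : KonigEgervary G)
include hKE

theorem ncard_compl_of_isMaxIndep {S : Set V} (hS : IsMaxIndep G S) : Sᶜ.ncard = muNum G := by
  have := Set.ncard_add_ncard_compl S
  have := hS.2
  unfold KonigEgervary at hKE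
  omega

theorem sub_le_diffSet_of_isMaxIndep {S : Set V} (hS : IsMaxIndep G S) :
    (alphaNum G : ℤ) - muNum G ≤ diffSet G S := by
  have := hS.1.two_mul_ncard_sub_le_diffSet
  have := hS.2
  unfold KonigEgervary at hKE
  omega

theorem critDiff_eq : critDiff G = alphaNum G - muNum G := by
  refine le_antisymm (csSup_le ⟨_, ∅, Set.pairwise_empty _, rfl⟩ ?_) ?_
  · rintro _ ⟨I, -, rfl⟩
    obtain ⟨M, hM, hMcard⟩ := exists_isMatching_ncard_edgeSet_eq_muNum G
    have := hM.diffSet_add_ncard_sdiff_le I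
    have := hM.ncard_verts
    unfold KonigEgervary at hKE
    omega
  · obtain ⟨S, hS⟩ := exists_isMaxIndep G
    exact (hKE.sub_le_diffSet_of_isMaxIndep hS).trans (diffSet_le_critDiff hS.1)

theorem isCriticalIndep_of_le {A : Set V} (hA : IsIndep G A)
    (h : (alphaNum G : ℤ) - muNum G ≤ diffSet G A) : IsCriticalIndep G A :=
  ⟨hA, (diffSet_le_critDiff hA).antisymm (hKE.critDiff_eq ▸ h)⟩

theorem isCriticalIndep_of_isMaxIndep {S : Set V} (hS : IsMaxIndep G S) : IsCriticalIndep G S :=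
  hKE.isCriticalIndep_of_le hS.1 (hKE.sub_le_diffSet_of_isMaxIndep hS)

theorem kerSet_subset_coreSet : kerSet G ⊆ coreSet G :=
  fun _ hv S hS => hv S (hKE.isCriticalIndep_of_isMaxIndep hS)

end KonigEgervary

section Induce

variable [Finite V] {G : SimpleGraph V} {W : Set V}

theorem IsIndep.ncard_le_alphaNum_induce {s : Set V} (hs : IsIndep G s) (hsW : s ⊆ W) :
    s.ncard ≤ alphaNum (G.induce W) := by
  have hs' : IsIndep (G.induce W) (Subtype.val ⁻¹' s) :=
    fun _ hx _ hy hne => hs hx hy (Subtype.val_injective.ne hne)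
  rw [← Set.ncard_preimage_of_injective_subset_range (f := (Subtype.val : W → V))
    Subtype.val_injective (by rwa [Subtype.range_coe])]
  exact hs'.ncard_le_alphaNum

theorem exists_isIndep_ncard_eq_alphaNum_induce (G : SimpleGraph V) (W : Set V) :
    ∃ s ⊆ W, IsIndep G s ∧ s.ncard = alphaNum (G.induce W) := by
  obtain ⟨s, hs, hcard⟩ := exists_isMaxIndep (G.induce W)
  refine ⟨Subtype.val '' s, Subtype.coe_image_subset W s, ?_, ?_⟩
  · rintro _ ⟨x, hx, rfl⟩ _ ⟨y, hy, rfl⟩ hne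
    exact hs hx hy (ne_of_apply_ne _ hne)
  · rw [Set.ncard_image_of_injective _ Subtype.val_injective, hcard]

theorem alphaNum_induce_le : alphaNum (G.induce W) ≤ alphaNum G := by
  obtain ⟨s, -, hs, hcard⟩ := exists_isIndep_ncard_eq_alphaNum_induce G W
  exact hcard ▸ hs.ncard_le_alphaNum

theorem SimpleGraph.Subgraph.IsMatching.ncard_edgeSet_le_muNum_induce {M : G.Subgraph}
    (hM : M.IsMatching) (hMW : M.verts ⊆ W) : M.edgeSet.ncard ≤ muNum (G.induce W) := by
  set M' := M.comap (Embedding.induce W).toHom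
  have hM' : M'.IsMatching := by
    intro x hx
    obtain ⟨w, hw, huniq⟩ := hM hx
    exact ⟨⟨w, hMW hw.snd_mem⟩, ⟨M.adj_sub hw, hw⟩,
      fun y hy => Subtype.ext (huniq _ hy.2)⟩
  have hverts : M'.verts.ncard = M.verts.ncard :=
    Set.ncard_preimage_of_injective_subset_range (f := (Subtype.val : W → V))
      Subtype.val_injective (by rwa [Subtype.range_coe])
  have := hM'.ncard_edgeSet_le_muNum
  have := hM.ncard_verts
  have := hM'.ncard_verts
  omega

theorem exists_isMatching_ncard_edgeSet_eq_muNum_induce (G : SimpleGraph V) (W : Set V) :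
    ∃ M : G.Subgraph, M.IsMatching ∧ M.verts ⊆ W ∧
      M.edgeSet.ncard = muNum (G.induce W) := by
  obtain ⟨M', hM', hcard⟩ := exists_isMatching_ncard_edgeSet_eq_muNum (G.induce W)
  set M := M'.map (Embedding.induce W).toHom
  have hM : M.IsMatching := hM'.map _ Subtype.val_injective
  have hverts : M.verts.ncard = M'.verts.ncard :=
    Set.ncard_image_of_injective _ Subtype.val_injective
  refine ⟨M, hM, Subtype.coe_image_subset W _, ?_⟩
  have := hM.ncard_verts
  have := hM'.ncard_verts
  omega

end Induce

section DeleteVertex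

variable [Finite V] {G : SimpleGraph V} {v : V}

theorem natCard_compl_singleton_add_one (v : V) :
    Nat.card ({v}ᶜ : Set V) + 1 = Nat.card V := by
  rw [Nat.card_coe_set_eq, ← Set.ncard_singleton v, Set.ncard_compl_add_ncard]

theorem konigEgervary_induce_compl_singleton_iff_card_le :
    KonigEgervary (G.induce {v}ᶜ) ↔
      Nat.card V ≤ alphaNum (G.induce {v}ᶜ) + muNum (G.induce {v}ᶜ) + 1 := by
  have := alphaNum_add_muNum_le (G.induce {v}ᶜ)
  have := natCard_compl_singleton_add_one v
  unfold KonigEgervary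
  omega

theorem alphaNum_induce_compl_singleton_of_notMem_coreSet (h : v ∉ coreSet G) :
    alphaNum (G.induce {v}ᶜ) = alphaNum G := by
  obtain ⟨S, hS, hvS⟩ : ∃ S, IsMaxIndep G S ∧ v ∉ S := by simpa [coreSet] using h
  refine alphaNum_induce_le.antisymm ?_
  rw [← hS.2]
  exact hS.1.ncard_le_alphaNum_induce (Set.subset_compl_singleton_iff.mpr hvS)

theorem alphaNum_induce_compl_singleton_add_one_of_mem_coreSet (h : v ∈ coreSet G) :
    alphaNum (G.induce {v}ᶜ) + 1 = alphaNum G := by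
  obtain ⟨S, hS⟩ := exists_isMaxIndep G
  obtain ⟨s, hsv, hs, hcard⟩ := exists_isIndep_ncard_eq_alphaNum_induce G {v}ᶜ
  have hlt : s.ncard < alphaNum G :=
    hs.ncard_le_alphaNum.lt_of_ne fun heq => hsv (h s ⟨hs, heq⟩) rfl
  have hle := (hS.1.mono Set.sdiff_subset).ncard_le_alphaNum_induce
    (Set.sdiff_subset_compl S {v})
  rw [Set.ncard_sdiff_singleton_of_mem (h S hS), hS.2] at hle
  omega

theorem muNum_le_muNum_induce_compl_singleton_add_one :
    muNum G ≤ muNum (G.induce {v}ᶜ) + 1 := by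
  obtain ⟨M, hM, hMcard⟩ := exists_isMatching_ncard_edgeSet_eq_muNum G
  by_cases hv : v ∈ M.verts
  · obtain ⟨w, hvw, -⟩ := hM hv
    have hM' := hM.deleteVerts_pair hvw
    have hle := hM'.ncard_edgeSet_le_muNum_induce (W := {v}ᶜ)
      fun x hx => Set.mem_compl_singleton_iff.mpr fun hxv => hx.2 (Or.inl hxv)
    have hverts : (M.deleteVerts {v, w}).verts.ncard + 2 = M.verts.ncard := by
      rw [Subgraph.deleteVerts_verts, ← Set.ncard_pair hvw.ne,
        Set.ncard_sdiff_add_ncard_of_subset (Set.pair_subset hv hvw.snd_mem)]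
    have := hM.ncard_verts
    have := hM'.ncard_verts
    omega
  · exact hMcard ▸ (hM.ncard_edgeSet_le_muNum_induce
      (Set.subset_compl_singleton_iff.mpr hv)).trans (Nat.le_succ _)

end DeleteVertex

namespace KonigEgervary

variable [Finite V] {G : SimpleGraph V} {v : V} (hKE : KonigEgervary G)
include hKE

/-- A Hall violator `T` would make `(S \ {v}) \ N(T)` a critical independent set avoiding `v`. -/
theorem ncard_le_ncard_neighborSet_between_of_mem_kerSet {S : Set V} (hS : IsMaxIndep G S)
    (hv : v ∈ kerSet G) {T : Set V} (hT : T ⊆ Sᶜ) :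
    T.ncard ≤ (⋃ x ∈ T, (G.between Sᶜ (S \ {v})).neighborSet x).ncard := by
  set N := ⋃ x ∈ T, (G.between Sᶜ (S \ {v})).neighborSet x
  by_contra! hlt
  have hN : N ⊆ S \ {v} := by
    refine Set.iUnion₂_subset fun x hx y hy => ?_
    rcases (between_adj.mp hy).2 with ⟨-, hy⟩ | ⟨hx', -⟩
    · exact hy
    · exact absurd hx'.1 (hT hx)
  set A := (S \ {v}) \ N
  have hNA : nbhd G A ⊆ Sᶜ \ T := by
    rintro u ⟨a, ha, hau⟩
    refine ⟨fun hu => hS.1 ha.1.1 hu hau.ne hau, fun hu => ha.2 ?_⟩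
    exact Set.mem_biUnion hu (between_adj.mpr ⟨hau.symm, Or.inl ⟨hT hu, ha.1⟩⟩)
  have hcrit : IsCriticalIndep G A :=
    hKE.isCriticalIndep_of_le (hS.1.mono (Set.sdiff_subset.trans Set.sdiff_subset)) ?_
  · exact (hv A hcrit).1.2 rfl
  have hvS : v ∈ S := hv S (hKE.isCriticalIndep_of_isMaxIndep hS)
  have hA : A.ncard + N.ncard + 1 = S.ncard := by
    rw [Set.ncard_sdiff_add_ncard_of_subset hN, Set.ncard_sdiff_singleton_add_one hvS]
  have hNAcard := Set.ncard_le_ncard hNA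
  rw [Set.ncard_sdiff hT] at hNAcard
  have := hKE.ncard_compl_of_isMaxIndep hS
  have := hS.2
  have := Set.ncard_le_ncard hT
  simp only [diffSet]
  omega

theorem exists_isMatching_notMem_verts_of_mem_kerSet (hv : v ∈ kerSet G) :
    ∃ M : G.Subgraph, M.IsMatching ∧ v ∉ M.verts ∧ muNum G ≤ M.edgeSet.ncard := by
  classical
  have := Fintype.ofFinite V
  obtain ⟨S, hS⟩ := exists_isMaxIndep G
  have hvS : v ∈ S := hv S (hKE.isCriticalIndep_of_isMaxIndep hS)
  set H := G.between Sᶜ (S \ {v})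
  have hH : H.IsBipartiteWith Sᶜ (S \ {v}) :=
    between_isBipartiteWith (disjoint_compl_left.mono_right Set.sdiff_subset)
  obtain ⟨M, hSM, hM⟩ := exists_isMatching_of_forall_ncard_le hH
    fun T hT => hKE.ncard_le_ncard_neighborSet_between_of_mem_kerSet hS hv hT
  have hverts : (M.map (Hom.ofLE between_le)).verts = M.verts := by simp
  refine ⟨M.map (Hom.ofLE between_le), hM.map_ofLE between_le, hverts ▸ fun hvM => ?_, ?_⟩
  · obtain ⟨w, hw, -⟩ := hM hvM
    rcases (between_adj.mp (M.adj_sub hw)).2 with ⟨hv', -⟩ | ⟨hv', -⟩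
    · exact hv' hvS
    · exact hv'.2 rfl
  · -- the partners of `Sᶜ` lie in `S`, so `M` covers at least `2 |Sᶜ| = 2 μ` vertices
    have hpartner := hM.ncard_inter_verts_le Sᶜ
    rw [Set.inter_eq_left.mpr hSM] at hpartner
    have hdisj : Disjoint Sᶜ (nbhd H Sᶜ ∩ M.verts) := by
      refine Set.disjoint_left.mpr fun x hx ⟨⟨a, ha, hax⟩, _⟩ => ?_
      rcases (between_adj.mp hax).2 with ⟨-, hx'⟩ | ⟨ha', -⟩
      · exact hx hx'.1
      · exact ha ha'.1
    have hsub : (Sᶜ ∪ (nbhd H Sᶜ ∩ M.verts)).ncard ≤ M.verts.ncard :=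
      Set.ncard_le_ncard (Set.union_subset hSM Set.inter_subset_right)
    rw [Set.ncard_union_eq hdisj] at hsub
    have := hKE.ncard_compl_of_isMaxIndep hS
    have := (hM.map_ofLE between_le).ncard_verts
    rw [hverts] at this
    omega

theorem induce_compl_singleton_of_notMem_coreSet (h : v ∉ coreSet G) :
    KonigEgervary (G.induce {v}ᶜ) := by
  obtain ⟨S, hS, hvS⟩ : ∃ S, IsMaxIndep G S ∧ v ∉ S := by simpa [coreSet] using h
  have hμ : 0 < muNum G :=
    hKE.ncard_compl_of_isMaxIndep hS ▸ (Set.ncard_pos).mpr ⟨v, hvS⟩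
  have := alphaNum_induce_compl_singleton_of_notMem_coreSet h
  have := muNum_le_muNum_induce_compl_singleton_add_one (G := G) (v := v)
  unfold KonigEgervary at hKE
  exact konigEgervary_induce_compl_singleton_iff_card_le.mpr (by omega)

theorem induce_compl_singleton_of_mem_kerSet (h : v ∈ kerSet G) :
    KonigEgervary (G.induce {v}ᶜ) := by
  obtain ⟨M, hM, hvM, hMcard⟩ := hKE.exists_isMatching_notMem_verts_of_mem_kerSet h
  have := alphaNum_induce_compl_singleton_add_one_of_mem_coreSet (hKE.kerSet_subset_coreSet h)
  have := hM.ncard_edgeSet_le_muNum_induce (Set.subset_compl_singleton_iff.mpr hvM)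
  unfold KonigEgervary at hKE
  exact konigEgervary_induce_compl_singleton_iff_card_le.mpr (by omega)

theorem not_induce_compl_singleton (hcore : v ∈ coreSet G) (hker : v ∉ kerSet G) :
    ¬ KonigEgervary (G.induce {v}ᶜ) := by
  intro hKEv
  obtain ⟨A, hA, hvA⟩ : ∃ A, IsCriticalIndep G A ∧ v ∉ A := by simpa [kerSet] using hker
  obtain ⟨M, hM, hMv, hMcard⟩ := exists_isMatching_ncard_edgeSet_eq_muNum_induce G {v}ᶜ
  have hbound := hM.diffSet_add_ncard_sdiff_le A
  have hvA' : 0 < (M.vertsᶜ \ A).ncard :=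
    (Set.ncard_pos).mpr ⟨v, fun hv => hMv hv rfl, hvA⟩
  have hdiff : diffSet G A = alphaNum G - muNum G := hA.2.trans hKE.critDiff_eq
  have := alphaNum_induce_compl_singleton_add_one_of_mem_coreSet hcore
  have := hM.ncard_verts
  have := natCard_compl_singleton_add_one v
  unfold KonigEgervary at hKE hKEv
  omega

theorem induce_compl_singleton_iff :
    KonigEgervary (G.induce {v}ᶜ) ↔ v ∉ coreSet G \ kerSet G := by
  refine ⟨fun hKEv ⟨hcore, hker⟩ => hKE.not_induce_compl_singleton hcore hker hKEv,
    fun h => ?_⟩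
  by_cases hcore : v ∈ coreSet G
  · exact hKE.induce_compl_singleton_of_mem_kerSet (not_not.mp fun hker => h ⟨hcore, hker⟩)
  · exact hKE.induce_compl_singleton_of_notMem_coreSet hcore

end KonigEgervary

theorem stmt_17 [Fintype V] (G : SimpleGraph V) (hKE : KonigEgervary G) :
    ({v : V | KonigEgervary (G.induce ({v}ᶜ : Set V))}.ncard : ℤ) =
      (Nat.card V : ℤ) - (coreSet G).ncard + (kerSet G).ncard := by
  have hset : {v : V | KonigEgervary (G.induce ({v}ᶜ : Set V))} = (coreSet G \ kerSet G)ᶜ :=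
    Set.ext fun _ => hKE.induce_compl_singleton_iff
  have hker := Set.ncard_le_ncard hKE.kerSet_subset_coreSet
  have hcore := Set.ncard_le_card (coreSet G)
  have hcompl := Set.ncard_add_ncard_compl (coreSet G \ kerSet G)
  rw [Set.ncard_sdiff hKE.kerSet_subset_coreSet] at hcompl
  rw [hset]
  omega
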